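/- arXiv:1801.00517 — 4 statements merged into one kernel-verified Lean document; each statement's English description precedes it below -/
import Mathlib

section
/- For coprime positive integers a and b, S(a,b) + S(b,a) = a/b + b/a + 1/(ab) - 3, where S(a,b) = 12·s(a,b) is the normalized Dedekind sum. -/
/-- The sawtooth function on rationals. -/
def saw (x : ℚ) : ℚ := if x.den = 1 then 0 else Int.fract x - 1/2

/-- The normalized Dedekind sum `S(a,b) = 12 s(a,b)`. -/
def S (a b : ℤ) : ℚ :=
  12 * ∑ k ∈ Finset.Icc 1 b.toNat, saw ((k : ℚ) / (b : ℚ)) * saw (((a : ℚ) * k) / (b : ℚ))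

/-!
Write `a k = b ⌊a k / b⌋ + (a k mod b)`. Since `k ↦ a k mod b` permutes `1, …, b - 1`, the
sawtooth values turn `b · S(a, b)` into an explicit polynomial in `a, b` minus
`12 Σ k ⌊a k / b⌋`. Applying the same permutation to squares, `Σ (a k mod b)² = Σ k²`, expresses
`Σ k ⌊a k / b⌋` through `Σ ⌊a k / b⌋²`, and counting lattice points under the line `b y = a x`
rewrites the latter through `Σ j ⌊b j / a⌋`. The resulting linear relation between the weighted
floor sums for `(a, b)` and `(b, a)` is the reciprocity law in disguise.
-/

open Finset

lemma sum_Icc_one_succ_top {M : Type*} [AddCommMonoid M] (f : ℤ → M) {m : ℤ} (hm : 0 ≤ m) :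
    ∑ k ∈ Icc 1 (m + 1), f k = ∑ k ∈ Icc 1 m, f k + f (m + 1) := by
  rw [← insert_Icc_right_eq_Icc_add_one (by omega), sum_insert (by simp), add_comm]

lemma two_mul_sum_Icc_id {m : ℤ} (hm : 0 ≤ m) : 2 * ∑ k ∈ Icc 1 m, k = m * (m + 1) := by
  induction m, hm using Int.leInduction with
  | base => simp
  | succ n hn ih => rw [sum_Icc_one_succ_top _ hn, mul_add, ih]; ring

lemma six_mul_sum_Icc_sq {m : ℤ} (hm : 0 ≤ m) :
    6 * ∑ k ∈ Icc 1 m, k ^ 2 = m * (m + 1) * (2 * m + 1) := by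
  induction m, hm using Int.leInduction with
  | base => simp
  | succ n hn ih => rw [sum_Icc_one_succ_top _ hn, mul_add, ih]; ring

lemma sum_Icc_two_mul_sub_one {m : ℤ} (hm : 0 ≤ m) : ∑ k ∈ Icc 1 m, (2 * k - 1) = m ^ 2 := by
  induction m, hm using Int.leInduction with
  | base => simp
  | succ n hn ih => rw [sum_Icc_one_succ_top _ hn, ih]; ring

lemma not_dvd_mul_of_isCoprime {a b k : ℤ} (hab : IsCoprime a b) (hk : 0 < k) (hkb : k < b) :
    ¬ b ∣ a * k := fun h => (Int.le_of_dvd hk (hab.symm.dvd_of_dvd_mul_left h)).not_gt hkb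

lemma sum_Icc_comp_mul_emod {M : Type*} [AddCommMonoid M] {a b : ℤ} (hab : IsCoprime a b)
    (f : ℤ → M) : ∑ k ∈ Icc 1 (b - 1), f (a * k % b) = ∑ k ∈ Icc 1 (b - 1), f k := by
  have maps : ∀ k ∈ Icc 1 (b - 1), a * k % b ∈ Icc 1 (b - 1) := by
    intro k hk
    rw [mem_Icc] at hk ⊢
    have hne : a * k % b ≠ 0 := fun h =>
      not_dvd_mul_of_isCoprime hab (by omega) (by omega) (Int.dvd_of_emod_eq_zero h)
    have := Int.emod_nonneg (a * k) (b := b) (by omega)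
    have := Int.emod_lt_of_pos (a * k) (b := b) (by omega)
    omega
  have inj : Set.InjOn (fun k => a * k % b) (Icc 1 (b - 1)) := by
    intro k hk k' hk' h
    simp only [coe_Icc, Set.mem_Icc] at hk hk'
    have hdvd : b ∣ a * (k' - k) := by rw [mul_sub]; exact Int.ModEq.dvd h
    have := Int.eq_zero_of_abs_lt_dvd (hab.symm.dvd_of_dvd_mul_left hdvd) (by rw [abs_lt]; omega)
    omega
  rw [← sum_image inj]
  congr
  exact eq_of_subset_of_card_le (fun x hx => by
    obtain ⟨k, hk, rfl⟩ := mem_image.1 hx; exact maps k hk) (card_image_of_injOn inj).ge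

lemma two_mul_sum_Icc_ediv {a b : ℤ} (hb : 0 < b) (hab : IsCoprime a b) :
    2 * ∑ k ∈ Icc 1 (b - 1), a * k / b = (a - 1) * (b - 1) := by
  have hperm := sum_Icc_comp_mul_emod hab (fun r => r)
  rw [sum_congr rfl fun k _ => Int.emod_def (a * k) b, sum_sub_distrib, ← mul_sum, ← mul_sum]
    at hperm
  have hgauss := two_mul_sum_Icc_id (m := b - 1) (by omega)
  refine mul_left_cancel₀ hb.ne' ?_
  linear_combination (-2) * hperm + (a - 1) * hgauss

lemma sq_eq_sum_Icc_ite {q n : ℤ} (hq : 0 ≤ q) (hqn : q ≤ n) :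
    q ^ 2 = ∑ j ∈ Icc 1 n, if j ≤ q then 2 * j - 1 else 0 := by
  rw [← sum_filter, ← sum_Icc_two_mul_sub_one hq]
  congr 1
  ext j
  simp only [mem_filter, mem_Icc]
  omega

lemma filter_Icc_le_mul {a c m : ℤ} (ha : 0 < a) (hc : 0 ≤ c) (hdvd : ¬ a ∣ c) :
    {k ∈ Icc 1 m | c ≤ a * k} = Icc (c / a + 1) m := by
  have hq := Int.ediv_nonneg hc ha.le
  ext k
  have key : c ≤ a * k ↔ c / a + 1 ≤ k := by
    rw [Int.add_one_le_iff, Int.ediv_lt_iff_lt_mul ha, mul_comm k]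
    exact ⟨fun h => lt_of_le_of_ne h fun h' => hdvd ⟨k, h'⟩, le_of_lt⟩
  simp only [mem_filter, mem_Icc, key]
  omega

/-- Both sides count the lattice points `(j, k)` with `1 ≤ j < a`, `1 ≤ k < b`, `b j < a k`,
each weighted by `2 j - 1`. -/
lemma sum_Icc_ediv_sq {a b : ℤ} (ha : 0 < a) (hb : 0 < b) (hab : IsCoprime a b) :
    ∑ k ∈ Icc 1 (b - 1), (a * k / b) ^ 2
      = ∑ j ∈ Icc 1 (a - 1), (2 * j - 1) * (b - 1 - b * j / a) := by
  have hsq : ∀ k ∈ Icc 1 (b - 1),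
      (a * k / b) ^ 2 = ∑ j ∈ Icc 1 (a - 1), if b * j ≤ a * k then 2 * j - 1 else 0 := by
    intro k hk
    rw [mem_Icc] at hk
    have : a * k / b < a := (Int.ediv_lt_iff_lt_mul hb).2 (by nlinarith)
    rw [sq_eq_sum_Icc_ite (n := a - 1) (Int.ediv_nonneg (by nlinarith) hb.le) (by omega)]
    simp only [Int.le_ediv_iff_mul_le hb, mul_comm _ b]
  rw [sum_congr rfl hsq, sum_comm]
  refine sum_congr rfl fun j hj => ?_
  rw [mem_Icc] at hj
  rw [← sum_filter, filter_Icc_le_mul ha (by nlinarith)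
      (not_dvd_mul_of_isCoprime hab.symm (by omega) (by omega)),
    sum_const, Int.card_Icc, nsmul_eq_mul, mul_comm]
  have : b * j / a < b := (Int.ediv_lt_iff_lt_mul ha).2 (by nlinarith)
  have : 0 ≤ b * j / a := Int.ediv_nonneg (by nlinarith) ha.le
  congr 1
  omega

noncomputable def sumMulEdiv (a b : ℤ) : ℤ := ∑ k ∈ Icc 1 (b - 1), k * (a * k / b)

lemma sumMulEdiv_reciprocity {a b : ℤ} (ha : 0 < a) (hb : 0 < b) (hab : IsCoprime a b) :
    12 * a * sumMulEdiv a b + 12 * b * sumMulEdiv b a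
      = 8 * a ^ 2 * b ^ 2 - 9 * a ^ 2 * b - 9 * a * b ^ 2 + a ^ 2 + b ^ 2 + 9 * a * b - 1 := by
  have hperm := sum_Icc_comp_mul_emod hab (· ^ 2)
  have hexpand : ∀ k ∈ Icc 1 (b - 1), (a * k % b) ^ 2
      = a ^ 2 * k ^ 2 - 2 * a * b * (k * (a * k / b)) + b ^ 2 * (a * k / b) ^ 2 := by
    intro k _
    rw [Int.emod_def]
    ring
  rw [sum_congr rfl hexpand, sum_add_distrib, sum_sub_distrib, ← mul_sum, ← mul_sum, ← mul_sum,
    sum_Icc_ediv_sq ha hb hab] at hperm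
  have hcount : ∀ j ∈ Icc 1 (a - 1), (2 * j - 1) * (b - 1 - b * j / a)
      = (b - 1) * (2 * j - 1) - 2 * (j * (b * j / a)) + b * j / a := by
    intro j _
    ring
  rw [sum_congr rfl hcount, sum_add_distrib, sum_sub_distrib, ← mul_sum, ← mul_sum,
    sum_Icc_two_mul_sub_one (by omega)] at hperm
  have hsq := six_mul_sum_Icc_sq (m := b - 1) (by omega)
  have hfloor := two_mul_sum_Icc_ediv ha hab.symm
  rw [sumMulEdiv, sumMulEdiv]
  refine mul_left_cancel₀ hb.ne' ?_
  linear_combination (-6) * hperm + (a ^ 2 - 1) * hsq + 3 * b ^ 2 * hfloor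

lemma three_mul_sum_Icc_mul_emod {a b : ℤ} (hb : 0 < b) (hab : IsCoprime a b) :
    3 * ∑ k ∈ Icc 1 (b - 1), (2 * k - b) * (2 * (a * k % b) - b)
      = b * ((b - 1) * (4 * a * b - 2 * a - 3 * b) - 12 * sumMulEdiv a b) := by
  have hexpand : ∀ k ∈ Icc 1 (b - 1), (2 * k - b) * (2 * (a * k % b) - b)
      = 4 * a * k ^ 2 - 4 * b * (k * (a * k / b)) - 2 * b * (1 + a) * k
        + 2 * b ^ 2 * (a * k / b) + b ^ 2 := by
    intro k _
    rw [Int.emod_def]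
    ring
  rw [sum_congr rfl hexpand, sum_add_distrib, sum_add_distrib, sum_sub_distrib, sum_sub_distrib,
    ← mul_sum, ← mul_sum, ← mul_sum, ← mul_sum, sum_const, Int.card_Icc, nsmul_eq_mul,
    show (b - 1 + 1 - 1).toNat = b - 1 by omega, sumMulEdiv]
  have hsq := six_mul_sum_Icc_sq (m := b - 1) (by omega)
  have hid := two_mul_sum_Icc_id (m := b - 1) (by omega)
  have hfloor := two_mul_sum_Icc_ediv hb hab
  linear_combination 2 * a * hsq - 3 * b * (1 + a) * hid + 3 * b ^ 2 * hfloor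

lemma saw_intCast (z : ℤ) : saw z = 0 := by
  simp [saw]

lemma saw_intCast_div {b c : ℤ} (hb : 0 < b) (hdvd : ¬ b ∣ c) :
    saw ((c : ℚ) / b) = ((c % b : ℤ) : ℚ) / b - 1 / 2 := by
  have hfract : Int.fract ((c : ℚ) / b) = ((c % b : ℤ) : ℚ) / b := by
    lift b to ℕ using hb.le
    rw [Int.cast_natCast]
    exact Int.fract_div_intCast_eq_div_intCast_mod
  have hden : ((c : ℚ) / b).den ≠ 1 := by
    intro hden
    rw [← Rat.coe_int_num_of_den_eq_one hden, Int.fract_intCast, eq_comm,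
      div_eq_zero_iff] at hfract
    norm_cast at hfract
    omega
  rw [saw, if_neg hden, hfract]

lemma sum_Icc_toNat {M : Type*} [AddCommMonoid M] (f : ℤ → M) (b : ℤ) :
    ∑ k ∈ Icc 1 b.toNat, f k = ∑ k ∈ Icc 1 b, f k := by
  have hmap : Icc 1 b = (Icc 1 b.toNat).map Nat.castEmbedding := by
    ext k
    simp only [mem_Icc, mem_map, Nat.castEmbedding_apply]
    constructor
    · intro hk
      exact ⟨k.toNat, by omega, by omega⟩
    · rintro ⟨n, hn, rfl⟩
      omega
  rw [hmap, sum_map]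
  rfl

lemma sq_mul_S {a b : ℤ} (hb : 0 < b) (hab : IsCoprime a b) :
    (b : ℚ) ^ 2 * S a b = 3 * ∑ k ∈ Icc 1 (b - 1), (2 * k - b) * (2 * (a * k % b) - b) := by
  have hb0 : (b : ℚ) ≠ 0 := by positivity
  have hcast : ∀ k : ℕ, (k : ℚ) = ((k : ℤ) : ℚ) := fun k => (Int.cast_natCast k).symm
  simp only [S, hcast]
  rw [sum_Icc_toNat (fun k => saw ((k : ℚ) / b) * saw (a * k / b)),
    ← insert_Icc_sub_one_right_eq_Icc (show 1 ≤ b by omega), sum_insert (by simp),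
    mul_div_assoc, div_self hb0, mul_one, ← Int.cast_one, saw_intCast, zero_mul, zero_add]
  push_cast
  rw [mul_sum, mul_sum, mul_sum]
  refine sum_congr rfl fun k hk => ?_
  rw [mem_Icc] at hk
  have hk_not_dvd : ¬ b ∣ k := fun h => (Int.le_of_dvd (by omega) h).not_gt (by omega)
  rw [saw_intCast_div hb hk_not_dvd, Int.emod_eq_of_lt (by omega) (by omega), ← Int.cast_mul,
    saw_intCast_div hb (not_dvd_mul_of_isCoprime hab (by omega) (by omega))]
  field_simp
  ring

lemma mul_S {a b : ℤ} (hb : 0 < b) (hab : IsCoprime a b) :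
    (b : ℚ) * S a b = (b - 1) * (4 * a * b - 2 * a - 3 * b) - 12 * sumMulEdiv a b := by
  have h := sq_mul_S hb hab
  rw [← Int.cast_ofNat, ← Int.cast_mul, three_mul_sum_Icc_mul_emod hb hab] at h
  push_cast at h
  refine mul_left_cancel₀ (show (b : ℚ) ≠ 0 by positivity) ?_
  linear_combination h

theorem stmt0 (a b : ℤ) (ha : 0 < a) (hb : 0 < b) (hab : IsCoprime a b) :
    S a b + S b a = (a : ℚ) / b + (b : ℚ) / a + 1 / ((a : ℚ) * b) - 3 := by
  have hrec := congrArg (Int.cast : ℤ → ℚ) (sumMulEdiv_reciprocity ha hb hab)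
  push_cast at hrec
  have ha0 : (a : ℚ) ≠ 0 := by positivity
  have hb0 : (b : ℚ) ≠ 0 := by positivity
  field_simp
  linear_combination a * mul_S hb hab + b * mul_S ha hab.symm - hrec
end

section
/- For coprime integers a and b with b > 0, the quantity b·S(a,b) is an integer, where S(a,b) denotes the normalized Dedekind sum. -/
lemma six_mul_sum_range_sq (n : ℕ) :
    6 * ∑ k ∈ Finset.range n, (k : ℤ) ^ 2 = (n - 1) * n * (2 * n - 1) := by
  induction n with
  | zero => simp
  | succ n ih => rw [Finset.sum_range_succ, mul_add, ih]; push_cast; ring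

lemma saw_intCast_div_of_not_dvd {x : ℤ} {n : ℕ} (hn : n ≠ 0) (hx : ¬ (n : ℤ) ∣ x) :
    saw ((x : ℚ) / n) = (x % n : ℤ) / n - 1 / 2 := by
  rw [saw, if_neg, Int.fract_div_intCast_eq_div_intCast_mod]
  rwa [← Int.cast_natCast, Rat.den_div_intCast_eq_one_iff _ _ (by exact_mod_cast hn)]

def dedekindTerm (a : ℤ) (n k : ℕ) : ℤ := 3 * (2 * ((k : ℤ) % n) - n) * (2 * (a * k % n) - n)

lemma natCast_dvd_sum_dedekindTerm (a : ℤ) (n : ℕ) :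
    (n : ℤ) ∣ ∑ k ∈ Finset.Ico 1 n, dedekindTerm a n k := by
  rcases Nat.eq_zero_or_pos n with rfl | hn
  · simp
  have hsq : 6 * ∑ k ∈ Finset.Ico 1 n, (k : ZMod n) ^ 2 = 0 := by
    simpa [Finset.sum_range_eq_add_Ico _ hn] using
      congrArg (Int.cast : ℤ → ZMod n) (six_mul_sum_range_sq n)
  rw [← ZMod.intCast_zmod_eq_zero_iff_dvd]
  push_cast [dedekindTerm, ZMod.intCast_mod, ZMod.natCast_self]
  calc ∑ k ∈ Finset.Ico 1 n, 3 * (2 * (k : ZMod n) - 0) * (2 * (a * k) - 0)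
      = 2 * a * (6 * ∑ k ∈ Finset.Ico 1 n, (k : ZMod n) ^ 2) := by
        rw [Finset.mul_sum, Finset.mul_sum]; exact Finset.sum_congr rfl fun k _ => by ring
    _ = 0 := by rw [hsq, mul_zero]

lemma natCast_mul_twelve_saw_mul_saw {a : ℤ} {n k : ℕ} (hn : n ≠ 0) (hk : ¬ (n : ℤ) ∣ k)
    (hak : ¬ (n : ℤ) ∣ a * k) :
    n * (12 * (saw ((k : ℚ) / n) * saw (a * k / n))) = dedekindTerm a n k / n := by
  have hk' := saw_intCast_div_of_not_dvd hn hk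
  have hak' := saw_intCast_div_of_not_dvd hn hak
  push_cast at hk' hak'
  rw [hk', hak', dedekindTerm]
  push_cast
  field_simp
  ring

lemma natCast_mul_S_eq {a : ℤ} {n : ℕ} (hn : n ≠ 0) (ha : IsCoprime a n) :
    n * S a n = (∑ k ∈ Finset.Ico 1 n, dedekindTerm a n k : ℤ) / n := by
  have hsaw_one : saw ((n : ℚ) / n) = 0 := by simp [saw, hn]
  rw [S, Int.toNat_natCast, ← Finset.Ico_insert_right (Nat.one_le_iff_ne_zero.2 hn),
    Finset.sum_insert (by simp), Int.cast_natCast, hsaw_one, zero_mul, zero_add,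
    Finset.mul_sum, Finset.mul_sum, Int.cast_sum, Finset.sum_div]
  refine Finset.sum_congr rfl fun k hk => ?_
  have hk : ¬ (n : ℤ) ∣ k := by
    rw [Finset.mem_Ico] at hk
    exact_mod_cast Nat.not_dvd_of_pos_of_lt hk.1 hk.2
  exact natCast_mul_twelve_saw_mul_saw hn hk fun hak => hk (ha.symm.dvd_of_dvd_mul_left hak)

theorem stmt1 (a b : ℤ) (hb : 0 < b) (hab : IsCoprime a b) :
    ∃ n : ℤ, (b : ℚ) * S a b = (n : ℚ) := by
  lift b to ℕ using hb.le with n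
  have hn : n ≠ 0 := by omega
  obtain ⟨c, hc⟩ := natCast_dvd_sum_dedekindTerm a n
  refine ⟨c, ?_⟩
  rw [Int.cast_natCast, natCast_mul_S_eq hn hab, hc, Int.cast_mul, Int.cast_natCast,
    mul_div_cancel_left₀ _ (Nat.cast_ne_zero.2 hn)]
end

section
/- Let a, q, t, j be integers with t > 0, q ≥ 2, gcd(t,q) = 1, t | a²+1, and set a' = a + tj, b' = q(a'²+1)/t. Assume gcd(a',q) = 1 and let t* satisfy t·t* ≡ 1 (mod q). Then S(a',b') has reduced denominator q and q·S(a',b') = λ(a,t,t*) + Δ(a·t* + j), where λ(a,t,t*) = (q²−1)a/t − (q²−1)a·t* − q·S(aq,t) and Δ(ℓ) = (q²−1)ℓ + q·S(ℓ,q). Moreover both λ(a,t,t*) and Δ(a·t*+j) are integers. -/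
/-!
Write `b' = q c` with `a'² + 1 = t c`. Rademacher's three-term reciprocity law, proved by
counting lattice points, is applied to the pairwise coprime triple `(a', q, t)`; its three terms
reduce to the Dedekind sums `S(q c, a')`, `S(a' t*, q)` and `-S(a' q, t)`. Eliminating
`S(q c, a')` with Dedekind reciprocity for `(a', q c)` gives
`S(a', q c) = (q² - 1) a' / (q t) - S(a' q, t) + S(a' t*, q)`, and reducing the first arguments
gives `q S(a', b') = λ + Δ(a t* + j)`. Integrality comes from `M S(x, M) ∈ ℤ` with
`M S(x, M) ≡ x + x⁻¹ (mod M)`: it makes `λ` an integer divisible by `q`, and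
`Δ(ℓ) ≡ ℓ⁻¹ (mod q)`, so the numerator of `S(a', b')` is prime to `q`.
-/

open Finset

namespace DedekindSum

def mulMod (x : ℤ) (M k : ℕ) : ℤ := x * k % M

def mulDiv (x : ℤ) (M k : ℕ) : ℤ := x * k / M

/-- For `u, v` prime to `M`, `V u v M = 4 M² ∑_{k=1}^{M-1} ((u k / M)) ((v k / M))`. -/
def V (u v : ℤ) (M : ℕ) : ℤ :=
  ∑ k ∈ Ico 1 M, (2 * mulMod u M k - M) * (2 * mulMod v M k - M)

def moment (x : ℤ) (M : ℕ) : ℤ := ∑ k ∈ Ico 1 M, (k : ℤ) * mulMod x M k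

lemma mulMod_eq (x : ℤ) (M k : ℕ) : mulMod x M k = x * k - M * mulDiv x M k := by
  rw [mulMod, mulDiv, Int.emod_def]

lemma mulMod_nonneg {M : ℕ} (hM : 0 < M) (x : ℤ) (k : ℕ) : 0 ≤ mulMod x M k :=
  Int.emod_nonneg _ (by exact_mod_cast hM.ne')

lemma mulMod_lt {M : ℕ} (hM : 0 < M) (x : ℤ) (k : ℕ) : mulMod x M k < M :=
  Int.emod_lt_of_pos _ (by exact_mod_cast hM)

lemma mulMod_one {M k : ℕ} (hk : k ∈ Ico 1 M) : mulMod 1 M k = k := by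
  rw [mem_Ico] at hk
  rw [mulMod, one_mul]
  exact Int.emod_eq_of_lt (by positivity) (by exact_mod_cast hk.2)

lemma mulMod_ne_zero {x : ℤ} {M k : ℕ} (hx : IsCoprime x M) (hk : k ∈ Ico 1 M) :
    mulMod x M k ≠ 0 := by
  rw [mem_Ico] at hk
  intro h
  have : (M : ℤ) ∣ k := hx.symm.dvd_of_dvd_mul_left (Int.dvd_of_emod_eq_zero h)
  have := Int.le_of_dvd (by exact_mod_cast hk.1) this
  omega

lemma mulMod_congr {x y : ℤ} {M : ℕ} (h : x ≡ y [ZMOD M]) (k : ℕ) :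
    mulMod x M k = mulMod y M k :=
  h.mul_right _

lemma mul_mulMod_emod (u w : ℤ) (M k : ℕ) : u * mulMod w M k % M = mulMod (u * w) M k := by
  rw [mulMod, mulMod, Int.mul_emod, Int.emod_emod_of_dvd _ dvd_rfl, ← Int.mul_emod, mul_assoc]

lemma mulMod_toNat_mem {x : ℤ} {M k : ℕ} (hx : IsCoprime x M) (hk : k ∈ Ico 1 M) :
    (mulMod x M k).toNat ∈ Ico 1 M := by
  have hM : 0 < M := by rw [mem_Ico] at hk; omega
  have := mulMod_ne_zero hx hk
  have := mulMod_nonneg hM x k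
  have := mulMod_lt hM x k
  rw [mem_Ico]
  omega

lemma mulMod_mulMod_toNat {x y : ℤ} {M k : ℕ} (hyx : y * x ≡ 1 [ZMOD M]) (hk : k ∈ Ico 1 M) :
    mulMod y M (mulMod x M k).toNat = k := by
  have hM : 0 < M := by rw [mem_Ico] at hk; omega
  rw [mulMod, Int.toNat_of_nonneg (mulMod_nonneg hM x k), mul_mulMod_emod, ← mulMod_one hk]
  exact mulMod_congr hyx k

lemma sum_comp_mulMod (g : ℤ → ℤ) {x : ℤ} {M : ℕ} (hx : IsCoprime x M) :
    ∑ k ∈ Ico 1 M, g (mulMod x M k) = ∑ k ∈ Ico 1 M, g k := by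
  obtain ⟨y, z, hyz⟩ := hx
  have hyx : y * x ≡ 1 [ZMOD M] := Int.modEq_iff_dvd.mpr ⟨z, by linear_combination -hyz⟩
  have hxy : x * y ≡ 1 [ZMOD M] := by rwa [mul_comm]
  have hy : IsCoprime y M := ⟨x, z, by linear_combination hyz⟩
  refine sum_nbij' (fun k ↦ (mulMod x M k).toNat) (fun k ↦ (mulMod y M k).toNat)
    (fun k hk ↦ mulMod_toNat_mem ⟨y, z, hyz⟩ hk) (fun k hk ↦ mulMod_toNat_mem hy hk)
    (fun k hk ↦ by simp only [mulMod_mulMod_toNat hyx hk, Int.toNat_natCast])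
    (fun k hk ↦ by simp only [mulMod_mulMod_toNat hxy hk, Int.toNat_natCast]) (fun k hk ↦ ?_)
  have hM : 0 < M := by rw [mem_Ico] at hk; omega
  rw [Int.toNat_of_nonneg (mulMod_nonneg hM x k)]

lemma sum_mulMod {x : ℤ} {M : ℕ} (hx : IsCoprime x M) :
    ∑ k ∈ Ico 1 M, mulMod x M k = ∑ k ∈ Ico 1 M, (k : ℤ) :=
  sum_comp_mulMod id hx

lemma sum_mulMod_sq {x : ℤ} {M : ℕ} (hx : IsCoprime x M) :
    ∑ k ∈ Ico 1 M, mulMod x M k ^ 2 = ∑ k ∈ Ico 1 M, (k : ℤ) ^ 2 :=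
  sum_comp_mulMod (· ^ 2) hx

lemma two_mul_sum_Ico_one (M : ℕ) : 2 * ∑ k ∈ Ico 1 M, (k : ℤ) = M * (M - 1) := by
  induction M with
  | zero => simp
  | succ M ih =>
    rcases Nat.eq_zero_or_pos M with rfl | hM
    · simp
    · rw [sum_Ico_succ_top (by omega)]
      push_cast
      linear_combination ih

lemma six_mul_sum_Ico_one_sq (M : ℕ) :
    6 * ∑ k ∈ Ico 1 M, (k : ℤ) ^ 2 = M * (M - 1) * (2 * M - 1) := by
  induction M with
  | zero => simp
  | succ M ih =>
    rcases Nat.eq_zero_or_pos M with rfl | hM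
    · simp
    · rw [sum_Ico_succ_top (by omega)]
      push_cast
      linear_combination ih

lemma sum_Ico_one_const {n : ℕ} (hn : 1 ≤ n) (C : ℤ) : ∑ _k ∈ Ico 1 n, C = (n - 1) * C := by
  rw [sum_const, Nat.card_Ico, nsmul_eq_mul, Nat.cast_sub hn, Nat.cast_one]

lemma mul_ne_mul_of_coprime {a c k : ℕ} (hac : Nat.Coprime a c) (hk : k ∈ Ico 1 a) (l : ℕ) :
    (k : ℤ) * c ≠ l * a := by
  rw [mem_Ico] at hk
  intro h
  have : a ∣ k := hac.dvd_of_dvd_mul_right ⟨l, by rw [mul_comm a]; exact_mod_cast h⟩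
  have := Nat.le_of_dvd (by omega) this
  omega

lemma mulDiv_nonneg (x : ℕ) {M : ℕ} (k : ℕ) : 0 ≤ mulDiv x M k :=
  Int.ediv_nonneg (by positivity) (by positivity)

lemma mul_lt_iff_le_mulDiv {x M k : ℕ} (hxM : Nat.Coprime x M) (hk : k ∈ Ico 1 M) (m : ℕ) :
    (m : ℤ) * M < k * x ↔ m ≤ mulDiv x M k := by
  have hM : (0 : ℤ) < M := by rw [mem_Ico] at hk; omega
  rw [mulDiv, Int.le_ediv_iff_mul_le hM, mul_comm (x : ℤ)]
  exact ⟨le_of_lt, fun h ↦ h.lt_of_ne (mul_ne_mul_of_coprime hxM.symm hk m).symm⟩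

lemma filter_mul_lt_eq_Ico {x M k : ℕ} (hxM : Nat.Coprime x M) (hk : k ∈ Ico 1 M) :
    (Ico 1 x).filter (fun m : ℕ ↦ (m : ℤ) * M < k * x) = Ico 1 ((mulDiv x M k).toNat + 1) := by
  have hlt : mulDiv x M k < x := by
    rw [← not_le, ← mul_lt_iff_le_mulDiv hxM hk, not_lt, mul_comm (x : ℤ)]
    rw [mem_Ico] at hk
    exact mul_le_mul_of_nonneg_right (by exact_mod_cast hk.2.le) (by positivity)
  have := mulDiv_nonneg x (M := M) k
  ext m
  simp only [mem_filter, mem_Ico, mul_lt_iff_le_mulDiv hxM hk]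
  omega

lemma mulDiv_eq_sum_ite {x M k : ℕ} (hxM : Nat.Coprime x M) (hk : k ∈ Ico 1 M) :
    mulDiv x M k = ∑ m ∈ Ico 1 x, if (m : ℤ) * M < k * x then 1 else 0 := by
  rw [← sum_filter, filter_mul_lt_eq_Ico hxM hk, sum_const, Nat.card_Ico, nsmul_one,
    Nat.add_sub_cancel, Int.toNat_of_nonneg (mulDiv_nonneg x k)]

lemma mulDiv_sq_add_mulDiv_eq_sum_ite {x M k : ℕ} (hxM : Nat.Coprime x M) (hk : k ∈ Ico 1 M) :
    mulDiv x M k ^ 2 + mulDiv x M k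
      = ∑ m ∈ Ico 1 x, if (m : ℤ) * M < k * x then 2 * (m : ℤ) else 0 := by
  rw [← sum_filter, filter_mul_lt_eq_Ico hxM hk, ← mul_sum, two_mul_sum_Ico_one]
  push_cast
  rw [Int.toNat_of_nonneg (mulDiv_nonneg x k)]
  ring

lemma ite_lt_add_ite_lt {y z : ℤ} (h : y ≠ z) (r : ℤ) :
    ((if y < z then r else 0) + if z < y then r else 0) = r := by
  rcases h.lt_or_gt with h | h <;> simp [h, h.not_gt]

/-- Counts the lattice points of `[1, a) × [1, c)` on either side of the line `k c = l a`. -/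
lemma sum_mul_mulDiv_reciprocity {a c : ℕ} (hac : Nat.Coprime a c) (ha : 1 ≤ a) :
    2 * ∑ l ∈ Ico 1 c, (l : ℤ) * mulDiv a c l
      + ∑ k ∈ Ico 1 a, (mulDiv c a k ^ 2 + mulDiv c a k) = (a - 1) * (c * (c - 1)) := by
  have below : ∀ l ∈ Ico 1 c, (l : ℤ) * mulDiv a c l
      = ∑ k ∈ Ico 1 a, if (k : ℤ) * c < l * a then (l : ℤ) else 0 := fun l hl ↦ by
    rw [mulDiv_eq_sum_ite hac hl, mul_sum]
    exact sum_congr rfl fun k _ ↦ by split_ifs <;> ring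
  rw [sum_congr rfl below, sum_congr rfl fun k hk ↦ mulDiv_sq_add_mulDiv_eq_sum_ite hac.symm hk,
    sum_comm, mul_sum, ← sum_add_distrib, ← two_mul_sum_Ico_one, ← sum_Ico_one_const ha]
  refine sum_congr rfl fun k hk ↦ ?_
  rw [mul_sum, mul_sum, ← sum_add_distrib]
  refine sum_congr rfl fun l _ ↦ ?_
  rw [mul_ite, mul_zero, ite_lt_add_ite_lt (mul_ne_mul_of_coprime hac hk l)]

/-- Each product of indicators says which of `k/a`, `m/b`, `l/c` is the largest. -/
lemma ite_mul_ite_cyclic {a b c k m l : ℤ} (ha : 0 < a) (hb : 0 < b) (hc : 0 < c)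
    (h₁ : k * b ≠ m * a) (h₂ : k * c ≠ l * a) (h₃ : m * c ≠ l * b) :
    (if m * a < k * b then (1 : ℤ) else 0) * (if l * a < k * c then 1 else 0)
      + (if l * b < m * c then 1 else 0) * (if k * b < m * a then 1 else 0)
      + (if k * c < l * a then 1 else 0) * (if m * c < l * b then 1 else 0) = 1 := by
  rcases h₁.lt_or_gt with h₁ | h₁ <;> rcases h₂.lt_or_gt with h₂ | h₂ <;>
    rcases h₃.lt_or_gt with h₃ | h₃ <;>
    simp only [h₁, h₂, h₃, h₁.not_gt, h₂.not_gt, h₃.not_gt, if_true, if_false] <;> norm_num <;>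
    nlinarith [mul_lt_mul_of_pos_left h₁ hc, mul_lt_mul_of_pos_left h₂ hb,
      mul_lt_mul_of_pos_left h₃ ha]

lemma sum_mulDiv_mul_mulDiv_cyclic {a b c : ℕ} (hab : Nat.Coprime a b) (hbc : Nat.Coprime b c)
    (hac : Nat.Coprime a c) (ha : 1 ≤ a) (hb : 1 ≤ b) (hc : 1 ≤ c) :
    ∑ k ∈ Ico 1 a, mulDiv b a k * mulDiv c a k + ∑ m ∈ Ico 1 b, mulDiv c b m * mulDiv a b m
      + ∑ l ∈ Ico 1 c, mulDiv a c l * mulDiv b c l = (a - 1) * ((b - 1) * (c - 1)) := by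
  have hA : ∑ k ∈ Ico 1 a, mulDiv b a k * mulDiv c a k = ∑ k ∈ Ico 1 a, ∑ m ∈ Ico 1 b,
      ∑ l ∈ Ico 1 c,
        (if (m : ℤ) * a < k * b then (1 : ℤ) else 0) * (if (l : ℤ) * a < k * c then 1 else 0) :=
    sum_congr rfl fun k hk ↦ by
      rw [mulDiv_eq_sum_ite hab.symm hk, mulDiv_eq_sum_ite hac.symm hk, sum_mul_sum]
  have hB : ∑ m ∈ Ico 1 b, mulDiv c b m * mulDiv a b m = ∑ k ∈ Ico 1 a, ∑ m ∈ Ico 1 b,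
      ∑ l ∈ Ico 1 c,
        (if (l : ℤ) * b < m * c then (1 : ℤ) else 0) * (if (k : ℤ) * b < m * a then 1 else 0) :=
    (sum_congr rfl fun m hm ↦ by
      rw [mulDiv_eq_sum_ite hbc.symm hm, mulDiv_eq_sum_ite hab hm, sum_mul_sum]
      exact sum_comm).trans sum_comm
  have hC : ∑ l ∈ Ico 1 c, mulDiv a c l * mulDiv b c l = ∑ k ∈ Ico 1 a, ∑ m ∈ Ico 1 b,
      ∑ l ∈ Ico 1 c,
        (if (k : ℤ) * c < l * a then (1 : ℤ) else 0) * (if (m : ℤ) * c < l * b then 1 else 0) :=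
    (sum_congr rfl fun l hl ↦ by
      rw [mulDiv_eq_sum_ite hac hl, mulDiv_eq_sum_ite hbc hl, sum_mul_sum]).trans
      (sum_comm.trans (sum_congr rfl fun _ _ ↦ sum_comm))
  rw [hA, hB, hC, ← sum_Ico_one_const ha]
  simp_rw [← sum_add_distrib]
  refine sum_congr rfl fun k hk ↦ ?_
  rw [← sum_Ico_one_const hb]
  refine sum_congr rfl fun m hm ↦ ?_
  rw [← mul_one ((c : ℤ) - 1), ← sum_Ico_one_const hc]
  refine sum_congr rfl fun l hl ↦ ?_
  exact ite_mul_ite_cyclic (a := (a : ℤ)) (b := b) (c := c) (by omega) (by omega) (by omega)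
    (mul_ne_mul_of_coprime hab hk m) (mul_ne_mul_of_coprime hac hk l)
    (mul_ne_mul_of_coprime hbc hm l)

lemma mul_sum_mul_mulDiv (x : ℤ) (M : ℕ) :
    M * ∑ k ∈ Ico 1 M, (k : ℤ) * mulDiv x M k = x * ∑ k ∈ Ico 1 M, (k : ℤ) ^ 2 - moment x M := by
  rw [moment, mul_sum, mul_sum, ← sum_sub_distrib]
  exact sum_congr rfl fun k _ ↦ by rw [mulMod_eq]; ring

lemma mul_sum_mulDiv {x : ℤ} {M : ℕ} (hx : IsCoprime x M) :
    M * ∑ k ∈ Ico 1 M, mulDiv x M k = (x - 1) * ∑ k ∈ Ico 1 M, (k : ℤ) := by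
  have h : M * ∑ k ∈ Ico 1 M, mulDiv x M k
      = x * ∑ k ∈ Ico 1 M, (k : ℤ) - ∑ k ∈ Ico 1 M, mulMod x M k := by
    rw [mul_sum, mul_sum, ← sum_sub_distrib]
    exact sum_congr rfl fun k _ ↦ by rw [mulMod_eq]; ring
  rw [h, sum_mulMod hx]
  ring

lemma sq_mul_sum_mulDiv_sq {x : ℤ} {M : ℕ} (hx : IsCoprime x M) :
    M ^ 2 * ∑ k ∈ Ico 1 M, mulDiv x M k ^ 2
      = (x ^ 2 + 1) * ∑ k ∈ Ico 1 M, (k : ℤ) ^ 2 - 2 * x * moment x M := by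
  have h : M ^ 2 * ∑ k ∈ Ico 1 M, mulDiv x M k ^ 2 = x ^ 2 * ∑ k ∈ Ico 1 M, (k : ℤ) ^ 2
      - 2 * x * moment x M + ∑ k ∈ Ico 1 M, mulMod x M k ^ 2 := by
    rw [moment, mul_sum, mul_sum, mul_sum, ← sum_sub_distrib, ← sum_add_distrib]
    exact sum_congr rfl fun k _ ↦ by rw [mulMod_eq]; ring
  rw [h, sum_mulMod_sq hx]
  ring

lemma mul_sum_mulMod_mul_mulMod (u v : ℤ) (M : ℕ) :
    M * ∑ k ∈ Ico 1 M, mulMod u M k * mulMod v M k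
      = -(u * v * M) * ∑ k ∈ Ico 1 M, (k : ℤ) ^ 2 + M * u * moment v M + M * v * moment u M
        + M ^ 3 * ∑ k ∈ Ico 1 M, mulDiv u M k * mulDiv v M k := by
  simp only [moment, mul_sum, ← sum_add_distrib]
  exact sum_congr rfl fun k _ ↦ by rw [mulMod_eq u, mulMod_eq v]; ring

lemma V_eq_sum_mulMod (u v : ℤ) {M : ℕ} (hM : 1 ≤ M) :
    V u v M = 4 * ∑ k ∈ Ico 1 M, mulMod u M k * mulMod v M k
      - 2 * M * ∑ k ∈ Ico 1 M, mulMod u M k - 2 * M * ∑ k ∈ Ico 1 M, mulMod v M k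
      + M ^ 2 * (M - 1) := by
  rw [V, mul_comm ((M : ℤ) ^ 2), ← sum_Ico_one_const hM]
  simp only [mul_sum, ← sum_sub_distrib, ← sum_add_distrib]
  exact sum_congr rfl fun k _ ↦ by ring

lemma V_eq_moment {u v : ℤ} {M : ℕ} (hM : 1 ≤ M) (hu : IsCoprime u M) (hv : IsCoprime v M) :
    V u v M = -(4 * u * v) * ∑ k ∈ Ico 1 M, (k : ℤ) ^ 2 + 4 * u * moment v M
      + 4 * v * moment u M + 4 * M ^ 2 * ∑ k ∈ Ico 1 M, mulDiv u M k * mulDiv v M k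
      - 4 * M * ∑ k ∈ Ico 1 M, (k : ℤ) + M ^ 2 * (M - 1) := by
  apply mul_left_cancel₀ (show (M : ℤ) ≠ 0 by positivity)
  rw [V_eq_sum_mulMod u v hM]
  linear_combination 4 * mul_sum_mulMod_mul_mulMod u v M
    - 2 * (M : ℤ) ^ 2 * sum_mulMod hu - 2 * (M : ℤ) ^ 2 * sum_mulMod hv

lemma moment_reciprocity {a c : ℕ} (hac : Nat.Coprime a c) (ha : 1 ≤ a) :
    12 * a ^ 2 * moment a c + 12 * c ^ 2 * moment c a
      = 2 * (a : ℤ) ^ 3 * c * (c - 1) * (2 * c - 1) + a * c * (c ^ 2 + 1) * (a - 1) * (2 * a - 1)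
        + 3 * (a : ℤ) ^ 2 * c * (a - 1) * (c - 1)
        - 6 * (a : ℤ) ^ 2 * c ^ 2 * (a - 1) * (c - 1) := by
  have hca : IsCoprime (c : ℤ) a := Nat.isCoprime_iff_coprime.mpr hac.symm
  have grid := sum_mul_mulDiv_reciprocity hac ha
  rw [sum_add_distrib] at grid
  linear_combination (-6 * (a : ℤ) ^ 2 * c) * grid
    + 12 * (a : ℤ) ^ 2 * mul_sum_mul_mulDiv a c + 6 * (c : ℤ) * sq_mul_sum_mulDiv_sq hca
    + 6 * (a : ℤ) * c * mul_sum_mulDiv hca + 2 * (a : ℤ) ^ 3 * six_mul_sum_Ico_one_sq c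
    + c * ((c : ℤ) ^ 2 + 1) * six_mul_sum_Ico_one_sq a
    + 3 * (a : ℤ) * c * (c - 1) * two_mul_sum_Ico_one a

/-- Rademacher's three-term reciprocity law. -/
theorem V_reciprocity {a b c : ℕ} (hab : Nat.Coprime a b) (hbc : Nat.Coprime b c)
    (hac : Nat.Coprime a c) (ha : 1 ≤ a) (hb : 1 ≤ b) (hc : 1 ≤ c) :
    3 * (b ^ 2 * c ^ 2 * V b c a + c ^ 2 * a ^ 2 * V c a b + a ^ 2 * b ^ 2 * V a b c)
      = a * b * c * (a ^ 2 + b ^ 2 + c ^ 2) - 3 * (a : ℤ) ^ 2 * b ^ 2 * c ^ 2 := by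
  have cop {x y : ℕ} (h : Nat.Coprime x y) : IsCoprime (x : ℤ) y := Nat.isCoprime_iff_coprime.mpr h
  linear_combination 3 * (b : ℤ) ^ 2 * c ^ 2 * V_eq_moment ha (cop hab.symm) (cop hac.symm)
    + 3 * (c : ℤ) ^ 2 * a ^ 2 * V_eq_moment hb (cop hbc.symm) (cop hab)
    + 3 * (a : ℤ) ^ 2 * b ^ 2 * V_eq_moment hc (cop hac) (cop hbc)
    + (b : ℤ) ^ 3 * moment_reciprocity hac ha + (c : ℤ) ^ 3 * moment_reciprocity hab ha
    + (a : ℤ) ^ 3 * moment_reciprocity hbc hb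
    + 12 * (a : ℤ) ^ 2 * b ^ 2 * c ^ 2 * sum_mulDiv_mul_mulDiv_cyclic hab hbc hac ha hb hc
    - 2 * (b : ℤ) ^ 3 * c ^ 3 * six_mul_sum_Ico_one_sq a
    - 2 * (c : ℤ) ^ 3 * a ^ 3 * six_mul_sum_Ico_one_sq b
    - 2 * (a : ℤ) ^ 3 * b ^ 3 * six_mul_sum_Ico_one_sq c
    - 6 * (a : ℤ) * b ^ 2 * c ^ 2 * two_mul_sum_Ico_one a
    - 6 * (a : ℤ) ^ 2 * b * c ^ 2 * two_mul_sum_Ico_one b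
    - 6 * (a : ℤ) ^ 2 * b ^ 2 * c * two_mul_sum_Ico_one c

lemma saw_intCast_div_natCast {i : ℤ} {M : ℕ} (hM : M ≠ 0) :
    saw (i / M) = if (M : ℤ) ∣ i then 0 else ((i % M : ℤ) : ℚ) / M - 1 / 2 := by
  have hden := Rat.den_div_intCast_eq_one_iff i M (by exact_mod_cast hM)
  rw [Int.cast_natCast] at hden
  simp only [saw, hden, Int.fract_div_intCast_eq_div_intCast_mod]

lemma saw_mul_div_natCast {x : ℤ} {M k : ℕ} (hx : IsCoprime x M) (hk : k ∈ Ico 1 M) :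
    saw (x * k / M) = (2 * mulMod x M k - M) / (2 * M) := by
  have hM : M ≠ 0 := by rw [mem_Ico] at hk; omega
  have hndvd : ¬ (M : ℤ) ∣ x * k := fun h ↦
    mulMod_ne_zero hx hk (Int.emod_eq_zero_of_dvd h)
  have := saw_intCast_div_natCast (i := x * k) hM
  push_cast at this
  rw [this, if_neg hndvd, mulMod]
  field_simp

lemma sq_mul_S {x : ℤ} {M : ℕ} (hM : 1 ≤ M) (hx : IsCoprime x M) :
    (M : ℚ) ^ 2 * S x M = 3 * V 1 x M := by
  have hM0 : (M : ℚ) ≠ 0 := by positivity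
  have hlast : saw ((M : ℚ) / M) = 0 := by simp [saw, hM0]
  simp only [S, Int.toNat_natCast, Int.cast_natCast]
  rw [← Ico_add_one_right_eq_Icc, sum_Ico_succ_top hM, hlast, zero_mul, add_zero, V, Int.cast_sum,
    mul_sum, mul_sum, mul_sum]
  refine sum_congr rfl fun k hk ↦ ?_
  have h₁ := saw_mul_div_natCast isCoprime_one_left hk
  rw [mulMod_one hk, Int.cast_one, one_mul] at h₁
  rw [h₁, saw_mul_div_natCast hx hk, mulMod_one hk]
  push_cast
  field_simp
  ring

lemma V_comm (u v : ℤ) (M : ℕ) : V u v M = V v u M :=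
  sum_congr rfl fun _ _ ↦ mul_comm _ _

lemma V_eq_of_mul_modEq {u v u' v' w : ℤ} {M : ℕ} (hw : IsCoprime w M)
    (hu : u * w ≡ u' [ZMOD M]) (hv : v * w ≡ v' [ZMOD M]) : V u v M = V u' v' M := by
  refine (sum_comp_mulMod (fun z ↦ (2 * (u * z % M) - M) * (2 * (v * z % M) - M)) hw).symm.trans
    (sum_congr rfl fun k _ ↦ ?_)
  simp only [mul_mulMod_emod, mulMod_congr hu, mulMod_congr hv]

lemma mulMod_neg {u : ℤ} {M k : ℕ} (hu : IsCoprime u M) (hk : k ∈ Ico 1 M) :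
    mulMod (-u) M k = M - mulMod u M k := by
  have hM : 0 < M := by rw [mem_Ico] at hk; omega
  have := mulMod_ne_zero hu hk
  have := mulMod_nonneg hM u k
  have := mulMod_lt hM u k
  have hmod : -u * k ≡ M - mulMod u M k [ZMOD M] :=
    Int.modEq_iff_dvd.mpr ⟨1 + mulDiv u M k, by linear_combination -mulMod_eq u M k⟩
  rw [mulMod, hmod]
  exact Int.emod_eq_of_lt (by omega) (by omega)

lemma V_neg_left {u : ℤ} (v : ℤ) {M : ℕ} (hu : IsCoprime u M) : V (-u) v M = -V u v M := by
  rw [V, V, ← sum_neg_distrib]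
  exact sum_congr rfl fun k hk ↦ by rw [mulMod_neg hu hk]; ring

lemma V_one_left {x : ℤ} {M : ℕ} (hM : 1 ≤ M) (hx : IsCoprime x M) :
    V 1 x M = 4 * moment x M - M ^ 2 * (M - 1) := by
  have h : ∑ k ∈ Ico 1 M, mulMod 1 M k * mulMod x M k = moment x M :=
    sum_congr rfl fun k hk ↦ by rw [mulMod_one hk]
  rw [V_eq_sum_mulMod 1 x hM, h, sum_congr rfl fun k hk ↦ mulMod_one hk, sum_mulMod hx]
  linear_combination (-2 * (M : ℤ)) * two_mul_sum_Ico_one M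

lemma saw_neg (x : ℚ) : saw (-x) = -saw x := by
  rw [saw, saw, Rat.den_neg_eq_den]
  split_ifs with h
  · simp
  · have hx : Int.fract x ≠ 0 := fun h0 ↦ by
      obtain ⟨z, rfl⟩ := Int.fract_eq_zero_iff.mp h0
      exact h (Rat.den_intCast z)
    rw [Int.fract_neg hx]
    ring

lemma S_neg (a b : ℤ) : S (-a) b = -S a b := by
  simp only [S, Int.cast_neg, neg_mul, neg_div, saw_neg, mul_neg, sum_neg_distrib]

lemma saw_add_intCast (x : ℚ) (n : ℤ) : saw (x + n) = saw x := by
  rw [saw, saw, Rat.add_intCast_den, Int.fract_add_intCast]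

lemma S_congr {x y b : ℤ} (h : x ≡ y [ZMOD b]) : S x b = S y b := by
  rcases eq_or_ne b 0 with rfl | hb
  · simp [S]
  obtain ⟨m, hm⟩ := h.dvd
  simp only [S]
  congr 1
  refine sum_congr rfl fun k _ ↦ ?_
  have hbQ : (b : ℚ) ≠ 0 := by exact_mod_cast hb
  rw [show (y : ℚ) * k / b = x * k / b + ((m * k : ℤ) : ℚ) by
    rw [show y = x + b * m by linear_combination hm]; push_cast; field_simp, saw_add_intCast]

lemma S_zero (b : ℤ) : S 0 b = 0 := by
  simp [S, saw]

lemma exists_mul_S_eq_intCast {x y : ℤ} {M : ℕ} (hM : 1 ≤ M) (hxy : x * y ≡ 1 [ZMOD M]) :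
    ∃ s : ℤ, (M : ℚ) * S x M = s ∧ s ≡ x + y [ZMOD M] := by
  obtain ⟨m, hm⟩ := hxy.symm.dvd
  have hx : IsCoprime x M := ⟨y, -m, by linear_combination hm⟩
  have hdvd : (M : ℤ) ^ 2 ∣ x * (12 * moment x M - M * (x + y)) :=
    ⟨(x ^ 2 + 1) * (2 * M - 3) - 6 * ∑ k ∈ Ico 1 M, mulDiv x M k ^ 2 - m, by
      linear_combination 6 * sq_mul_sum_mulDiv_sq hx + (x ^ 2 + 1) * six_mul_sum_Ico_one_sq M
        - M * hm⟩
  obtain ⟨w, hw⟩ := hx.symm.pow_left.dvd_of_dvd_mul_left hdvd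
  refine ⟨x + y + M * (w - 3 * (M - 1)), ?_, Int.modEq_iff_dvd.mpr ⟨-(w - 3 * (M - 1)), by ring⟩⟩
  apply mul_left_cancel₀ (show (M : ℚ) ≠ 0 by positivity)
  rw [← mul_assoc, ← sq, sq_mul_S hM hx, V_one_left hM hx]
  have hwQ : (12 * moment x M - M * (x + y) : ℚ) = M ^ 2 * w := by exact_mod_cast hw
  push_cast
  linear_combination hwQ

lemma V_one_right_eq_zero (u v : ℤ) : V u v 1 = 0 := by
  simp [V]

theorem S_reciprocity {a b : ℕ} (hab : Nat.Coprime a b) (ha : 1 ≤ a) (hb : 1 ≤ b) :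
    (a * b : ℚ) * (S a b + S b a) = a ^ 2 + b ^ 2 + 1 - 3 * a * b := by
  have law := V_reciprocity hab (Nat.coprime_one_right b) (Nat.coprime_one_right a) ha hb le_rfl
  rw [Nat.cast_one, V_one_right_eq_zero, V_comm b] at law
  have lawQ := congrArg (Int.cast : ℤ → ℚ) law
  push_cast at lawQ
  apply mul_left_cancel₀ (show (a * b : ℚ) ≠ 0 by positivity)
  have hSab := sq_mul_S hb (Nat.isCoprime_iff_coprime.mpr hab)
  have hSba := sq_mul_S ha (Nat.isCoprime_iff_coprime.mpr hab.symm)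
  linear_combination (a : ℚ) ^ 2 * hSab + (b : ℚ) ^ 2 * hSba + lawQ

lemma S_three_term_of_sq_add_one_eq_mul {n q t c : ℕ} {tb : ℤ} (hn : 1 ≤ n) (hq : 1 ≤ q)
    (ht : 1 ≤ t) (hc : n ^ 2 + 1 = t * c) (hnq : Nat.Coprime n q) (htq : Nat.Coprime t q)
    (htb : t * tb ≡ 1 [ZMOD q]) :
    (n * q * t : ℚ) * (S (q * c) n + S (n * tb) q - S (n * q) t)
      = n ^ 2 + q ^ 2 + t ^ 2 - 3 * n * q * t := by
  have hcZ : (n : ℤ) ^ 2 + 1 = t * c := by exact_mod_cast hc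
  have hnt : IsCoprime (n : ℤ) t := ⟨-n, c, by linear_combination -hcZ⟩
  have hnc : IsCoprime (n : ℤ) c := ⟨-n, t, by linear_combination -hcZ⟩
  have hnq' : IsCoprime (n : ℤ) q := Nat.isCoprime_iff_coprime.mpr hnq
  have htq' : IsCoprime (t : ℤ) q := Nat.isCoprime_iff_coprime.mpr htq
  have htbq : IsCoprime tb q := by
    obtain ⟨m, hm⟩ := htb.symm.dvd
    exact ⟨t, -m, by linear_combination hm⟩
  have law := V_reciprocity hnq htq.symm (Nat.isCoprime_iff_coprime.mp hnt) hn hq ht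
  -- `c ≡ t⁻¹ (mod n)`, `tb ≡ t⁻¹ (mod q)` and `n² ≡ -1 (mod t)` turn each `V` into a Dedekind sum.
  have e₁ : V q t n = V 1 (q * c) n :=
    (V_eq_of_mul_modEq hnc.symm rfl (Int.modEq_iff_dvd.mpr ⟨-n, by linear_combination hcZ⟩)).trans
      (V_comm _ _ _)
  have e₂ : V t n q = V 1 (n * tb) q := V_eq_of_mul_modEq htbq htb rfl
  have e₃ : V n q t = -V 1 (n * q) t := by
    rw [V_eq_of_mul_modEq (u' := -1) (v' := n * q) hnt
      (Int.modEq_iff_dvd.mpr ⟨-c, by linear_combination -hcZ⟩) (by rw [mul_comm]),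
      V_neg_left _ isCoprime_one_left]
  rw [e₁, e₂, e₃] at law
  have lawQ := congrArg (Int.cast : ℤ → ℚ) law
  push_cast at lawQ
  have hA := sq_mul_S hn (hnq'.symm.mul_left hnc.symm)
  have hB := sq_mul_S hq (hnq'.mul_left htbq)
  have hC := sq_mul_S ht (hnt.mul_left htq'.symm)
  apply mul_left_cancel₀ (show (n * q * t : ℚ) ≠ 0 by positivity)
  linear_combination lawQ + (q ^ 2 * t ^ 2 : ℚ) * hA + (t ^ 2 * n ^ 2 : ℚ) * hB
    - (n ^ 2 * q ^ 2 : ℚ) * hC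

lemma S_eq_of_sq_add_one_eq_mul_of_pos {n q t c : ℕ} {tb : ℤ} (hn : 1 ≤ n) (hq : 1 ≤ q)
    (ht : 1 ≤ t) (hc : n ^ 2 + 1 = t * c) (hnq : Nat.Coprime n q) (htq : Nat.Coprime t q)
    (htb : t * tb ≡ 1 [ZMOD q]) :
    S n (q * c) = ((q : ℚ) ^ 2 - 1) * n / (q * t) - S (n * q) t + S (n * tb) q := by
  have hc1 : 1 ≤ c := Nat.pos_of_ne_zero fun h ↦ by simp [h] at hc
  have hcZ : (n : ℤ) ^ 2 + 1 = t * c := by exact_mod_cast hc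
  have hcQ : (n : ℚ) ^ 2 + 1 = t * c := by exact_mod_cast hc
  have hnc : Nat.Coprime n c := Nat.isCoprime_iff_coprime.mp ⟨-n, t, by linear_combination -hcZ⟩
  have three := S_three_term_of_sq_add_one_eq_mul hn hq ht hc hnq htq htb
  have recip := S_reciprocity (hnq.mul_right hnc) hn (Nat.mul_pos hq hc1)
  push_cast at recip ⊢
  apply mul_left_cancel₀ (show (n ^ 2 * q ^ 2 * c * t ^ 2 : ℚ) ≠ 0 by positivity)
  rw [mul_add, mul_sub, show (n ^ 2 * q ^ 2 * c * t ^ 2 : ℚ) * ((q ^ 2 - 1) * n / (q * t))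
    = n ^ 3 * q * c * t * (q ^ 2 - 1) by field_simp]
  linear_combination (n * q * t ^ 2 : ℚ) * recip - (n * q * c * t : ℚ) * three
    + (n * q * t * (t - q ^ 2 * c) : ℚ) * hcQ

theorem S_eq_of_sq_add_one_eq_mul {n tb : ℤ} {q t c : ℕ} (hq : 1 ≤ q) (ht : 1 ≤ t)
    (hc : n ^ 2 + 1 = t * c) (hnq : IsCoprime n q) (htq : Nat.Coprime t q)
    (htb : t * tb ≡ 1 [ZMOD q]) :
    S n (q * c) = ((q : ℚ) ^ 2 - 1) * n / (q * t) - S (n * q) t + S (n * tb) q := by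
  rcases lt_trichotomy n 0 with hneg | rfl | hpos
  · obtain ⟨m, rfl⟩ : ∃ m : ℕ, n = -m := ⟨n.natAbs, by omega⟩
    have h := S_eq_of_sq_add_one_eq_mul_of_pos (n := m) (by omega) hq ht
      (by exact_mod_cast (by linear_combination hc : (m : ℤ) ^ 2 + 1 = t * c))
      (Nat.isCoprime_iff_coprime.mp ((IsCoprime.neg_left_iff _ _).mp hnq)) htq htb
    simp only [neg_mul, S_neg, Int.cast_neg, Int.cast_natCast, h]
    ring
  · have htc : t * c = 1 := by exact_mod_cast (by linear_combination -hc : (t * c : ℤ) = 1)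
    simp [S_zero, Nat.eq_one_of_mul_eq_one_right htc]
  · lift n to ℕ using hpos.le
    exact S_eq_of_sq_add_one_eq_mul_of_pos (n := n) (by omega) hq ht (by exact_mod_cast hc)
      (Nat.isCoprime_iff_coprime.mp hnq) htq htb

-- The paper's `λ(a, t, t*)` and `Δ(ℓ)`.
def dedekindLambda (q a t tstar : ℤ) : ℚ :=
  ((q ^ 2 - 1 : ℚ) * a) / t - (q ^ 2 - 1 : ℚ) * a * tstar - (q : ℚ) * S (a * q) t

def dedekindDelta (q l : ℤ) : ℚ := (q ^ 2 - 1 : ℚ) * l + (q : ℚ) * S l q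

lemma exists_intCast_eq_dedekindLambda {a tstar : ℤ} {q t : ℕ} (ht : 1 ≤ t)
    (htq : IsCoprime (t : ℤ) q) (hta : (t : ℤ) ∣ a ^ 2 + 1) (hts : t * tstar ≡ 1 [ZMOD q]) :
    ∃ L : ℤ, (L : ℚ) = dedekindLambda q a t tstar ∧ (q : ℤ) ∣ L := by
  obtain ⟨u, v, huv⟩ := id htq
  obtain ⟨w, hw⟩ := hta
  obtain ⟨e, he⟩ := hts.symm.dvd
  -- `v ≡ q⁻¹` and `a² ≡ -1` modulo `t`
  have hinv : a * q * -(a * v) ≡ 1 [ZMOD t] :=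
    Int.modEq_iff_dvd.mpr ⟨w - a ^ 2 * u, by linear_combination a ^ 2 * huv + hw⟩
  obtain ⟨s, hs, hsc⟩ := exists_mul_S_eq_intCast ht hinv
  obtain ⟨z, hz⟩ := hsc.symm.dvd
  have htL : (t : ℤ) * (-(a * u) - (q ^ 2 - 1) * a * tstar - q * z)
      = (q ^ 2 - 1) * a - (q ^ 2 - 1) * a * tstar * t - q * s := by
    linear_combination q * hz - a * huv
  refine ⟨-(a * u) - (q ^ 2 - 1) * a * tstar - q * z, ?_, ?_⟩
  · have htQ : (t : ℚ) ≠ 0 := by positivity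
    have htLQ : (t : ℚ) * (-(a * u) - (q ^ 2 - 1) * a * tstar - q * z : ℤ)
        = (q ^ 2 - 1) * a - (q ^ 2 - 1) * a * tstar * t - q * s := by exact_mod_cast htL
    apply mul_left_cancel₀ htQ
    rw [htLQ, dedekindLambda, ← hs]
    push_cast
    field_simp
  · refine htq.symm.dvd_of_dvd_mul_left ⟨q * a - q * a * tstar * t - s + a * e, ?_⟩
    rw [htL]
    linear_combination a * he

lemma isCoprime_of_modEq {x y M : ℤ} (h : x ≡ y [ZMOD M]) (hx : IsCoprime x M) :
    IsCoprime y M := by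
  obtain ⟨c, hc⟩ := h.dvd
  rw [show y = x + M * c by linear_combination hc]
  exact hx.add_mul_left_left c

lemma exists_intCast_eq_dedekindDelta {l : ℤ} {q : ℕ} (hq : 1 ≤ q) (hl : IsCoprime l q) :
    ∃ D : ℤ, (D : ℚ) = dedekindDelta q l ∧ IsCoprime D q := by
  obtain ⟨y, v, hyv⟩ := hl
  have hly : l * y ≡ 1 [ZMOD q] := Int.modEq_iff_dvd.mpr ⟨v, by linear_combination -hyv⟩
  obtain ⟨s, hs, hsc⟩ := exists_mul_S_eq_intCast hq hly
  refine ⟨(q ^ 2 - 1) * l + s, by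
    rw [dedekindDelta, Int.cast_natCast, hs]; push_cast; ring,
    isCoprime_of_modEq (x := y) ?_ ⟨l, v, by linear_combination hyv⟩⟩
  calc y ≡ (q ^ 2 - 1) * l + (l + y) [ZMOD q] := Int.modEq_iff_dvd.mpr ⟨q * l, by ring⟩
    _ ≡ (q ^ 2 - 1) * l + s [ZMOD q] := hsc.symm.add_left _

lemma mul_S_eq_dedekindLambda_add_dedekindDelta {a j tstar : ℤ} {q t c : ℕ} (hq : 1 ≤ q)
    (ht : 1 ≤ t) (hc : (a + t * j) ^ 2 + 1 = t * c) (ha'q : IsCoprime (a + t * j) q)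
    (htq : Nat.Coprime t q) (hts : t * tstar ≡ 1 [ZMOD q]) :
    (q : ℚ) * S (a + t * j) (q * c)
      = dedekindLambda q a t tstar + dedekindDelta q (a * tstar + j) := by
  obtain ⟨e, he⟩ := hts.symm.dvd
  have hS₁ : S ((a + t * j) * q) t = S (a * q) t :=
    S_congr (Int.modEq_iff_dvd.mpr ⟨-(j * q), by ring⟩)
  have hS₂ : S ((a + t * j) * tstar) q = S (a * tstar + j) q :=
    S_congr (Int.modEq_iff_dvd.mpr ⟨-(j * e), by linear_combination -j * he⟩)
  have hq0 : (q : ℚ) ≠ 0 := by positivity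
  have ht0 : (t : ℚ) ≠ 0 := by positivity
  rw [S_eq_of_sq_add_one_eq_mul hq ht hc ha'q htq hts, hS₁, hS₂, dedekindLambda, dedekindDelta]
  push_cast
  field_simp
  ring

lemma exists_sq_add_one_eq_mul {a : ℤ} {t : ℕ} (ht : 0 < t) (hta : (t : ℤ) ∣ a ^ 2 + 1) (j : ℤ) :
    ∃ c : ℕ, (a + t * j) ^ 2 + 1 = t * c := by
  obtain ⟨w, hw⟩ := hta
  obtain ⟨c, hc⟩ : (t : ℤ) ∣ (a + t * j) ^ 2 + 1 :=
    ⟨w + 2 * a * j + t * j ^ 2, by linear_combination hw⟩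
  have hpos : (0 : ℤ) < t * c := hc ▸ by positivity
  lift c to ℕ using (pos_of_mul_pos_right hpos (by positivity)).le
  exact ⟨c, hc⟩

end DedekindSum

open DedekindSum in
theorem stmt8 (a q t j tstar a' b' : ℤ) (hq : 2 ≤ q) (ht : 0 < t) (htq : IsCoprime t q)
    (hta : t ∣ a ^ 2 + 1) (ha' : a' = a + t * j) (hb' : b' * t = q * (a' ^ 2 + 1))
    (ha'q : IsCoprime a' q) (hts : t * tstar ≡ 1 [ZMOD q]) :
    (∃ k : ℤ, IsCoprime k q ∧ S a' b' = (k : ℚ) / q) ∧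
    ∃ L D : ℤ,
      (L : ℚ) = ((q ^ 2 - 1 : ℚ) * a) / t - (q ^ 2 - 1 : ℚ) * a * tstar
          - (q : ℚ) * S (a * q) t ∧
      (D : ℚ) = (q ^ 2 - 1 : ℚ) * (a * tstar + j) + (q : ℚ) * S (a * tstar + j) q ∧
      (q : ℚ) * S a' b' = (L : ℚ) + (D : ℚ) := by
  lift q to ℕ using (by omega)
  lift t to ℕ using ht.le
  subst ha'
  obtain ⟨c, hc⟩ := exists_sq_add_one_eq_mul (by omega) hta j
  obtain rfl : b' = q * c := mul_right_cancel₀ (show (t : ℤ) ≠ 0 by omega) (by rw [hb', hc]; ring)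
  have hl : IsCoprime (a * tstar + j) q := by
    obtain ⟨e, he⟩ := hts.symm.dvd
    refine (isCoprime_of_modEq (Int.modEq_iff_dvd.mpr ⟨a * e, ?_⟩) ha'q).of_mul_left_right
      (x := (t : ℤ))
    linear_combination a * he
  obtain ⟨L, hL, z, rfl⟩ := exists_intCast_eq_dedekindLambda (by omega) htq hta hts
  obtain ⟨D, hD, hDq⟩ := exists_intCast_eq_dedekindDelta (by omega) hl
  have hLD : ((q * z + D : ℤ) : ℚ) = ((q : ℤ) : ℚ) * S (a + t * j) (q * c) := by
    rw [Int.cast_add, hL, hD, Int.cast_natCast, mul_S_eq_dedekindLambda_add_dedekindDelta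
      (by omega) (by omega) hc ha'q (Nat.isCoprime_iff_coprime.mp htq) hts]
  refine ⟨⟨q * z + D, ?_, ?_⟩, q * z, D, hL, hD.trans (by simp [dedekindDelta]), ?_⟩
  · rw [add_comm]
    exact hDq.add_mul_left_left z
  · rw [eq_div_iff (by positivity), mul_comm, ← hLD]
  · rw [← hLD]
    push_cast
    ring
end

section
/- Let q be an odd positive integer and ℓ an integer coprime to q. Then q·S(ℓ,q) ≡ q + 1 − 2·(ℓ/q) (mod 8), where (ℓ/q) denotes the Jacobi symbol. -/
/-!
For `0 < k < q` let `r_k` be the least positive residue of `l k`. Then `((k/q)) = k/q - 1/2`,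
`((l k/q)) = r_k/q - 1/2`, and `k ↦ r_k` permutes `1, …, q - 1`, so expanding the sum gives
`q S(l,q) = 12 T/q - 3q(q-1)` with `T = ∑ k r_k`. Substituting `r_k = l k - q ⌊l k/q⌋` turns
this into the integer `2l(q-1)(2q-1) - 12A - 3q(q-1)` with `A = ∑ k ⌊l k/q⌋`, so modulo 8 only
the parity of `A` matters, and `A ≡ l ∑ k² + T (mod 2)`. Modulo 2, `T` is the sum of the `r_k`
over odd `k`; for even `k = 2j` one has `r_{2j} ≡ [r_j > q/2]`, which brings in Gauss's count
`μ = #{j ≤ q/2 | r_j > q/2}`.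

It remains to prove Gauss's lemma `(l/q) = (-1)^μ` for the Jacobi symbol. Eisenstein's parity
argument gives `μ ≡ ∑_{k ≤ q/2} ⌊a k/q⌋ (mod 2)` for odd `a`, and counting lattice points under
the diagonal of the rectangle `(0, q/2) × (0, a/2)` shows that `(-1)^μ` obeys quadratic
reciprocity. It also obeys the rule for `-l`, so strong induction on `q` finishes the proof.
-/

open Finset NumberTheorySymbols

lemma saw_of_fract_ne_zero {x : ℚ} (h : Int.fract x ≠ 0) : saw x = Int.fract x - 1 / 2 := by
  refine if_neg fun hden => h ?_
  rw [← Rat.coe_int_num_of_den_eq_one hden, Int.fract_intCast]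

lemma saw_intCast_div_s9 {q : ℕ} [NeZero q] {x : ℤ} (hx : (x : ZMod q) ≠ 0) :
    saw (x / q) = (x : ZMod q).val / q - 1 / 2 := by
  have hfract : Int.fract ((x : ℚ) / q) = (x : ZMod q).val / q := by
    rw [Int.fract_div_intCast_eq_div_intCast_mod, ← ZMod.val_intCast, Int.cast_natCast]
  have hval : ((x : ZMod q).val : ℚ) ≠ 0 := by exact_mod_cast (ZMod.val_ne_zero _).mpr hx
  rw [saw_of_fract_ne_zero (hfract ▸ div_ne_zero hval (NeZero.ne _)), hfract]

lemma sum_Icc_id_mul_two (n : ℕ) : (∑ k ∈ Icc 1 n, k) * 2 = n * (n + 1) := by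
  induction n with
  | zero => simp
  | succ n ih => rw [sum_Icc_succ_top (by omega), add_mul, ih]; ring

lemma sum_Icc_sq_mul_six (n : ℕ) :
    (∑ k ∈ Icc 1 n, k ^ 2) * 6 = n * (n + 1) * (2 * n + 1) := by
  induction n with
  | zero => simp
  | succ n ih => rw [sum_Icc_succ_top (by omega), add_mul, ih]; ring

lemma sum_Icc_id_of_odd {q : ℕ} (hq : Odd q) : ∑ k ∈ Icc 1 (q - 1), k = q / 2 * q := by
  obtain ⟨m, rfl⟩ := hq
  have h := sum_Icc_id_mul_two (2 * m)
  rw [Nat.add_sub_cancel, show (2 * m + 1) / 2 = m by omega]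
  linarith

lemma natCast_ne_zero_of_mem_Icc {q k : ℕ} (hk : k ∈ Icc 1 (q - 1)) : (k : ZMod q) ≠ 0 := by
  rw [Ne, ZMod.natCast_eq_zero_iff]
  rw [mem_Icc] at hk
  exact fun h => absurd (Nat.le_of_dvd (by omega) h) (by omega)

lemma mem_Icc_sub_one_of_mem_Icc_div_two {q k : ℕ} (hk : k ∈ Icc 1 (q / 2)) :
    k ∈ Icc 1 (q - 1) := by
  simp only [mem_Icc] at hk ⊢
  omega

section UnitsMul

variable {q : ℕ} [NeZero q] (u : (ZMod q)ˣ)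

lemma val_units_mul_mem_Icc {k : ℕ} (hk : k ∈ Icc 1 (q - 1)) :
    (u * k : ZMod q).val ∈ Icc 1 (q - 1) := by
  have hne : (u * k : ZMod q).val ≠ 0 := by
    rw [ZMod.val_ne_zero, Ne, Units.mul_right_eq_zero]
    exact natCast_ne_zero_of_mem_Icc hk
  have := ZMod.val_lt (u * k : ZMod q)
  rw [mem_Icc]
  omega

lemma val_units_inv_mul_val_units_mul {k : ℕ} (hk : k ∈ Icc 1 (q - 1)) :
    (↑u⁻¹ * ((u * k : ZMod q).val : ZMod q)).val = k := by
  rw [ZMod.natCast_zmod_val, Units.inv_mul_cancel_left, ZMod.val_cast_of_lt]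
  rw [mem_Icc] at hk
  have := NeZero.pos q
  omega

lemma natAbs_valMinAbs_units_mul_mem_Icc {k : ℕ} (hk : k ∈ Icc 1 (q / 2)) :
    (u * k : ZMod q).valMinAbs.natAbs ∈ Icc 1 (q / 2) := by
  have hne : (u * k : ZMod q).valMinAbs.natAbs ≠ 0 := by
    rw [Ne, Int.natAbs_eq_zero, ZMod.valMinAbs_eq_zero, Units.mul_right_eq_zero]
    exact natCast_ne_zero_of_mem_Icc (mem_Icc_sub_one_of_mem_Icc_div_two hk)
  have := ZMod.natAbs_valMinAbs_le (u * k : ZMod q)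
  rw [mem_Icc]
  omega

lemma natAbs_valMinAbs_units_inv_mul {k : ℕ} (hk : k ∈ Icc 1 (q / 2)) :
    (↑u⁻¹ * ((u * k : ZMod q).valMinAbs.natAbs : ZMod q)).valMinAbs.natAbs = k := by
  have hk' : (k : ZMod q).valMinAbs.natAbs = k := by
    rw [ZMod.valMinAbs_natCast_of_le_half (mem_Icc.mp hk).2, Int.natAbs_natCast]
  rw [ZMod.natCast_natAbs_valMinAbs]
  split_ifs
  · rw [Units.inv_mul_cancel_left, hk']
  · rw [mul_neg, Units.inv_mul_cancel_left, ZMod.natAbs_valMinAbs_neg, hk']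

end UnitsMul

section IsUnit

variable {q : ℕ} [NeZero q] {M : Type*} [AddCommMonoid M] {a : ZMod q} (ha : IsUnit a)
include ha

lemma sum_comp_val_mul_of_isUnit (g : ℕ → M) :
    ∑ k ∈ Icc 1 (q - 1), g (a * k).val = ∑ k ∈ Icc 1 (q - 1), g k := by
  obtain ⟨u, rfl⟩ := ha
  exact sum_nbij' (fun k => (u * k : ZMod q).val) (fun k => (↑u⁻¹ * k : ZMod q).val)
    (fun _ hk => val_units_mul_mem_Icc u hk) (fun _ hk => val_units_mul_mem_Icc u⁻¹ hk)
    (fun _ hk => val_units_inv_mul_val_units_mul u hk)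
    (fun _ hk => by simpa using val_units_inv_mul_val_units_mul u⁻¹ hk) (fun _ _ => rfl)

lemma sum_comp_natAbs_valMinAbs_mul_of_isUnit (g : ℕ → M) :
    ∑ k ∈ Icc 1 (q / 2), g (a * k).valMinAbs.natAbs = ∑ k ∈ Icc 1 (q / 2), g k := by
  obtain ⟨u, rfl⟩ := ha
  exact sum_nbij' (fun k => (u * k : ZMod q).valMinAbs.natAbs)
    (fun k => (↑u⁻¹ * k : ZMod q).valMinAbs.natAbs)
    (fun _ hk => natAbs_valMinAbs_units_mul_mem_Icc u hk)
    (fun _ hk => natAbs_valMinAbs_units_mul_mem_Icc u⁻¹ hk)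
    (fun _ hk => natAbs_valMinAbs_units_inv_mul u hk)
    (fun _ hk => by simpa using natAbs_valMinAbs_units_inv_mul u⁻¹ hk) (fun _ _ => rfl)

end IsUnit

def residueMoment (l : ℤ) (q : ℕ) : ℕ := ∑ k ∈ Icc 1 (q - 1), k * ((l : ZMod q) * k).val

-- `Int` division rounds down for a positive divisor, so `l * k / q = ⌊l k / q⌋`.
def floorMoment (l : ℤ) (q : ℕ) : ℤ := ∑ k ∈ Icc 1 (q - 1), k * (l * k / q)

section DedekindSum

variable {q : ℕ} [NeZero q] {l : ℤ}

lemma S_natCast_eq_sum (hl : IsUnit (l : ZMod q)) :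
    S l q = 12 * ∑ k ∈ Icc 1 (q - 1),
      ((k : ℚ) / q - 1 / 2) * ((((l : ZMod q) * k).val : ℚ) / q - 1 / 2) := by
  have hq1 : 1 ≤ q := NeZero.one_le
  have hsaw_one : saw 1 = 0 := by simp [saw]
  rw [S, Int.toNat_natCast, ← Nat.sub_add_cancel hq1, sum_Icc_succ_top le_add_self,
    Nat.add_sub_cancel, Nat.sub_add_cancel hq1, Int.cast_natCast, div_self (NeZero.ne _),
    hsaw_one, zero_mul, add_zero]
  congr 1
  refine sum_congr rfl fun k hk => ?_
  have hk0 := natCast_ne_zero_of_mem_Icc hk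
  have hlk : ((l * k : ℤ) : ZMod q) ≠ 0 := by
    push_cast
    exact hl.mul_right_eq_zero.not.mpr hk0
  have hkq : k < q := by rw [mem_Icc] at hk; omega
  have hsaw_k := saw_intCast_div_s9 (q := q) (x := k) (by exact_mod_cast hk0)
  have hsaw_lk := saw_intCast_div_s9 hlk
  push_cast at hsaw_k hsaw_lk
  rw [hsaw_k, hsaw_lk, ZMod.val_cast_of_lt hkq]

lemma natCast_mul_S_natCast_eq_residueMoment (hl : IsUnit (l : ZMod q)) :
    (q : ℚ) * S l q = 12 * residueMoment l q / q - 3 * q * (q - 1) := by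
  set r : ℕ → ℕ := fun k => ((l : ZMod q) * k).val
  have hsum_r : ∑ k ∈ Icc 1 (q - 1), (r k : ℚ) = ∑ k ∈ Icc 1 (q - 1), (k : ℚ) :=
    sum_comp_val_mul_of_isUnit hl (fun n => (n : ℚ))
  have hsum_id : (∑ k ∈ Icc 1 (q - 1), (k : ℚ)) * 2 = (q - 1) * q := by
    have := congrArg (Nat.cast : ℕ → ℚ) (sum_Icc_id_mul_two (q - 1))
    push_cast [Nat.cast_pred (NeZero.pos q)] at this
    linear_combination this
  have hq : (q : ℚ) ≠ 0 := NeZero.ne _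
  have hterm : ∀ k ∈ Icc 1 (q - 1), ((k : ℚ) / q - 1 / 2) * ((r k : ℚ) / q - 1 / 2)
      = (k : ℚ) * r k / q ^ 2 - ((k : ℚ) + r k) / (2 * q) + 1 / 4 := fun k _ => by
    field_simp
    ring
  rw [S_natCast_eq_sum hl, sum_congr rfl hterm, sum_add_distrib, sum_sub_distrib, ← sum_div,
    ← sum_div, sum_add_distrib, hsum_r, sum_const, Nat.card_Icc, Nat.add_sub_cancel, nsmul_eq_mul,
    Nat.cast_pred (NeZero.pos q), residueMoment]
  push_cast
  field_simp
  linear_combination (-48 * q) * hsum_id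

lemma residueMoment_eq :
    (residueMoment l q : ℤ)
      = l * ∑ k ∈ Icc 1 (q - 1), (k : ℤ) ^ 2 - q * floorMoment l q := by
  rw [residueMoment, floorMoment, mul_sum, mul_sum, ← sum_sub_distrib]
  push_cast
  refine sum_congr rfl fun k _ => ?_
  have hval : ((((l : ZMod q) * k).val : ℕ) : ℤ) = l * k % q := by
    rw [← ZMod.val_intCast]
    push_cast
    rfl
  rw [hval, Int.emod_def]
  ring

lemma natCast_mul_S_natCast_eq_floorMoment (hl : IsUnit (l : ZMod q)) :
    (q : ℚ) * S l q
      = ((2 * l * (q - 1) * (2 * q - 1) - 12 * floorMoment l q - 3 * q * (q - 1) : ℤ) : ℚ) := by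
  have hsum_sq : (∑ k ∈ Icc 1 (q - 1), (k : ℚ) ^ 2) * 6 = (q - 1) * q * (2 * q - 1) := by
    have := congrArg (Nat.cast : ℕ → ℚ) (sum_Icc_sq_mul_six (q - 1))
    push_cast [Nat.cast_pred (NeZero.pos q)] at this
    linear_combination this
  have hT := congrArg (Int.cast : ℤ → ℚ) (residueMoment_eq (l := l) (q := q))
  have hq : (q : ℚ) ≠ 0 := NeZero.ne _
  push_cast at hT ⊢
  rw [natCast_mul_S_natCast_eq_residueMoment hl, hT]
  field_simp
  linear_combination 2 * l * hsum_sq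

end DedekindSum

def gaussCount (l : ℤ) (q : ℕ) : ℕ :=
  #{k ∈ Icc 1 (q / 2) | q / 2 < ((l : ZMod q) * (k : ℕ)).val}

lemma gaussCount_congr {q : ℕ} {l l' : ℤ} (h : (l : ZMod q) = l') :
    gaussCount l q = gaussCount l' q := by
  simp only [gaussCount, h]

lemma neg_one_pow_eq_neg_one_pow_of_cast_zmod_two {m n : ℕ} (h : (m : ZMod 2) = n) :
    (-1 : ℤ) ^ m = (-1) ^ n := by
  rw [neg_one_pow_eq_pow_mod_two, (ZMod.natCast_eq_natCast_iff' m n 2).mp h,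
    ← neg_one_pow_eq_pow_mod_two]

section Negation

variable {q : ℕ} (hq : Odd q) {l : ℤ} (hl : IsUnit (l : ZMod q))
include hq hl

lemma gaussCount_neg_add_gaussCount : gaussCount (-l) q + gaussCount l q = q / 2 := by
  have : NeZero q := ⟨hq.pos.ne'⟩
  have hq2 := Nat.odd_iff.mp hq
  have hflip : ∀ k ∈ Icc 1 (q / 2),
      q / 2 < (((-l : ℤ) : ZMod q) * k).val ↔ ¬ q / 2 < ((l : ZMod q) * k).val := by
    intro k hk
    have hne : (l : ZMod q) * (k : ZMod q) ≠ 0 := hl.mul_right_eq_zero.not.mpr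
      (natCast_ne_zero_of_mem_Icc (mem_Icc_sub_one_of_mem_Icc_div_two hk))
    have hlt := ZMod.val_lt ((l : ZMod q) * (k : ZMod q))
    have hpos := (ZMod.val_ne_zero _).mpr hne
    rw [Int.cast_neg, neg_mul, ZMod.neg_val, if_neg hne]
    omega
  rw [gaussCount, filter_congr hflip, gaussCount, add_comm, card_filter_add_card_filter_not,
    Nat.card_Icc, Nat.add_sub_cancel]

lemma neg_one_pow_gaussCount_neg :
    (-1 : ℤ) ^ gaussCount (-l) q = ZMod.χ₄ q * (-1) ^ gaussCount l q := by
  rw [ZMod.χ₄_eq_neg_one_pow (Nat.odd_iff.mp hq), ← gaussCount_neg_add_gaussCount hq hl,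
    pow_add, mul_assoc, ← pow_add, Even.neg_one_pow ⟨_, rfl⟩, mul_one]

end Negation

lemma val_cast_zmod_two {q : ℕ} (hq : Odd q) (x : ZMod q) :
    ((x.val : ℕ) : ZMod 2) = (x.valMinAbs.natAbs : ZMod 2) + if q / 2 < x.val then 1 else 0 := by
  have : NeZero q := ⟨hq.pos.ne'⟩
  have hq2 := Nat.odd_iff.mp hq
  have hx := x.val_lt
  rw [ZMod.valMinAbs_natAbs_eq_min]
  split_ifs with h
  · rw [min_eq_right (by omega), Nat.cast_sub hx.le, hq.natCast_zmod_two]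
    ring_nf
    reduce_mod_char
  · rw [min_eq_left (by omega), add_zero]

def eisensteinSum (a q : ℕ) : ℕ := ∑ k ∈ Icc 1 (q / 2), a * k / q

lemma gaussCount_cast_zmod_two {a q : ℕ} (ha : Odd a) (hq : Odd q) (hcop : a.Coprime q) :
    (gaussCount a q : ZMod 2) = eisensteinSum a q := by
  have : NeZero q := ⟨hq.pos.ne'⟩
  have hunit : IsUnit (a : ZMod q) := (ZMod.isUnit_iff_coprime a q).mpr hcop
  have hdiv : ∑ k ∈ Icc 1 (q / 2), a * k
      = q * eisensteinSum a q + ∑ k ∈ Icc 1 (q / 2), ((a : ZMod q) * k).val := by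
    rw [eisensteinSum, mul_sum, ← sum_add_distrib]
    refine sum_congr rfl fun k _ => ?_
    rw [← Nat.cast_mul, ZMod.val_natCast, Nat.div_add_mod]
  have h := congrArg (Nat.cast : ℕ → ZMod 2) hdiv
  push_cast at h
  simp only [val_cast_zmod_two hq, sum_add_distrib, ha.natCast_zmod_two, hq.natCast_zmod_two,
    one_mul, sum_comp_natAbs_valMinAbs_mul_of_isUnit hunit (fun n => (n : ZMod 2))] at h
  rw [gaussCount, card_filter, Nat.cast_sum]
  push_cast
  linear_combination (norm := (ring_nf; reduce_mod_char)) h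

lemma eisensteinSum_eq_card (a q : ℕ) :
    eisensteinSum a q = #{x ∈ Icc 1 (q / 2) ×ˢ Icc 1 (a / 2) | x.2 * q ≤ a * x.1} := by
  have hterm : ∀ k ∈ Icc 1 (q / 2), a * k / q = #{j ∈ Icc 1 (a / 2) | j * q ≤ a * k} := by
    intro k hk
    have hq : 0 < q := by rw [mem_Icc] at hk; omega
    have hle : a * k / q ≤ a / 2 :=
      calc a * k / q ≤ q / 2 * a / q := by rw [mul_comm a]; gcongr; exact (mem_Icc.mp hk).2
        _ ≤ a / 2 := Nat.div_mul_div_le_div _ _ _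
    rw [ZMod.div_eq_filter_card hq hle, Nat.succ_eq_add_one, Ico_add_one_right_eq_Icc]
  rw [eisensteinSum, sum_congr rfl hterm]
  simp only [card_eq_sum_ones, sum_filter, sum_product]

lemma eisensteinSum_add_eisensteinSum {a q : ℕ} (hcop : a.Coprime q) :
    eisensteinSum a q + eisensteinSum q a = q / 2 * (a / 2) := by
  have hcard : q / 2 * (a / 2) = #(Icc 1 (q / 2) ×ˢ Icc 1 (a / 2)) := by simp
  rw [eisensteinSum_eq_card, eisensteinSum_eq_card, hcard,
    ← card_filter_add_card_filter_not (s := Icc 1 (q / 2) ×ˢ Icc 1 (a / 2))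
      (p := fun x => x.2 * q ≤ a * x.1)]
  congr 1
  refine card_nbij' Prod.swap Prod.swap (fun y hy => ?_) (fun x hx => ?_)
    (fun _ _ => rfl) (fun _ _ => rfl)
  · simp only [mem_coe, mem_filter, mem_product, Prod.fst_swap, Prod.snd_swap] at hy ⊢
    refine ⟨hy.1.symm, fun hle => ?_⟩
    have hdiag : a * y.2 = q * y.1 := by linarith [hy.2]
    have hdvd : q ∣ y.2 := hcop.symm.dvd_of_dvd_mul_left ⟨y.1, hdiag⟩
    have hy2 := mem_Icc.mp hy.1.2
    have := Nat.le_of_dvd hy2.1 hdvd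
    omega
  · simp only [mem_coe, mem_filter, mem_product, Prod.fst_swap, Prod.snd_swap, not_le] at hx ⊢
    exact ⟨hx.1.symm, by linarith [hx.2]⟩

lemma jacobiSym_eq_neg_one_pow_gaussCount_of_swap {a q : ℕ} (ha : Odd a) (hq : Odd q)
    (hcop : a.Coprime q) (h : J(q | a) = (-1) ^ gaussCount q a) :
    J(a | q) = (-1) ^ gaussCount a q := by
  rw [jacobiSym.quadratic_reciprocity ha hq, h,
    neg_one_pow_eq_neg_one_pow_of_cast_zmod_two (gaussCount_cast_zmod_two hq ha hcop.symm),
    neg_one_pow_eq_neg_one_pow_of_cast_zmod_two (gaussCount_cast_zmod_two ha hq hcop),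
    mul_comm (a / 2), ← eisensteinSum_add_eisensteinSum hcop, pow_add, mul_assoc, ← pow_add,
    Even.neg_one_pow ⟨_, rfl⟩, mul_one]

theorem jacobiSym_eq_neg_one_pow_gaussCount {q : ℕ} (hq : Odd q) {l : ℤ} (hl : IsCoprime l q) :
    J(l | q) = (-1) ^ gaussCount l q := by
  induction q using Nat.strong_induction_on generalizing l with
  | _ q ih =>
  obtain rfl | hq1 := eq_or_ne q 1
  · simp [gaussCount]
  have : NeZero q := ⟨hq.pos.ne'⟩
  have : Fact (1 < q) := ⟨by have := hq.pos; omega⟩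
  have hunit : IsUnit (l : ZMod q) := (ZMod.coe_int_isUnit_iff_isCoprime l q).mpr hl.symm
  have hodd_lt : ∀ b : ℕ, Odd b → b < q → IsUnit (b : ZMod q) →
      J(b | q) = (-1) ^ gaussCount b q := fun b hb hbq hbu =>
    have hcop := (ZMod.isUnit_iff_coprime b q).mp hbu
    jacobiSym_eq_neg_one_pow_gaussCount_of_swap hb hq hcop
      (ih b hbq hb (Nat.isCoprime_iff_coprime.mpr hcop.symm))
  set a := (l : ZMod q).val
  have hla : (l : ZMod q) = ((a : ℤ) : ZMod q) := by simp [a]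
  have haq : a < q := ZMod.val_lt _
  have ha0 : a ≠ 0 := (ZMod.val_ne_zero _).mpr hunit.ne_zero
  rw [jacobiSym.mod_left' ((ZMod.intCast_eq_intCast_iff' _ _ _).mp hla), gaussCount_congr hla]
  rcases Nat.even_or_odd a with heven | hodd
  · have hb : ((a : ℤ) : ZMod q) = ((-((q - a : ℕ) : ℤ) : ℤ) : ZMod q) := by
      push_cast [Nat.cast_sub haq.le]
      simp
    have hbu : IsUnit ((q - a : ℕ) : ZMod q) := by
      have h := hla ▸ hunit
      rwa [hb, Int.cast_neg, IsUnit.neg_iff, Int.cast_natCast] at h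
    rw [jacobiSym.mod_left' ((ZMod.intCast_eq_intCast_iff' _ _ _).mp hb), jacobiSym.neg _ hq,
      gaussCount_congr hb, neg_one_pow_gaussCount_neg hq (by simpa using hbu),
      hodd_lt (q - a) (Nat.Odd.sub_even haq.le hq heven) (by omega) hbu]
  · exact hodd_lt a hodd haq (by simpa [hla] using hunit)

lemma sum_natCast_mul_zmod_two (s : Finset ℕ) (f : ℕ → ZMod 2) :
    ∑ k ∈ s, (k : ZMod 2) * f k = ∑ k ∈ s with ¬Even k, f k := by
  rw [sum_filter]
  refine sum_congr rfl fun k _ => ?_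
  rcases Nat.even_or_odd k with hk | hk
  · rw [hk.natCast_zmod_two, zero_mul, if_neg (not_not.mpr hk)]
  · rw [hk.natCast_zmod_two, one_mul, if_pos (Nat.not_even_iff_odd.mpr hk)]

lemma sum_filter_even_Icc_two_mul {M : Type*} [AddCommMonoid M] (m : ℕ) (f : ℕ → M) :
    ∑ k ∈ Icc 1 (2 * m) with Even k, f k = ∑ j ∈ Icc 1 m, f (2 * j) := by
  have himage : {k ∈ Icc 1 (2 * m) | Even k} = (Icc 1 m).image (2 * ·) := by
    ext k
    simp only [mem_filter, mem_Icc, mem_image, Nat.even_iff]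
    constructor
    · rintro ⟨⟨h1, h2⟩, h⟩
      exact ⟨k / 2, by omega, by omega⟩
    · rintro ⟨j, ⟨h1, h2⟩, rfl⟩
      omega
  rw [himage, sum_image fun _ _ _ _ h => by simpa using h]

lemma val_two_mul_cast_zmod_two {q : ℕ} (hq : Odd q) (x : ZMod q) :
    (((2 * x).val : ℕ) : ZMod 2) = if q / 2 < x.val then 1 else 0 := by
  have : NeZero q := ⟨hq.pos.ne'⟩
  have hq2 := Nat.odd_iff.mp hq
  have hx := x.val_lt
  have hval : (2 * x).val = 2 * x.val % q := by
    rw [ZMod.val_mul, ZMod.val_two_eq_two_mod, Nat.mod_mul_mod]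
  split_ifs with h
  · rw [hval, Nat.mod_eq_sub_mod (by omega), Nat.mod_eq_of_lt (by omega),
      Nat.cast_sub (by omega), hq.natCast_zmod_two]
    push_cast
    reduce_mod_char
  · rw [hval, Nat.mod_eq_of_lt (by omega)]
    push_cast
    reduce_mod_char

lemma sum_Icc_natCast_zmod_two_of_odd {q : ℕ} (hq : Odd q) :
    ∑ k ∈ Icc 1 (q - 1), (k : ZMod 2) = (q / 2 : ℕ) := by
  rw [← Nat.cast_sum, sum_Icc_id_of_odd hq, Nat.cast_mul, hq.natCast_zmod_two, mul_one]

section Parity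

variable {q : ℕ} (hq : Odd q) {l : ℤ} (hl : IsUnit (l : ZMod q))
include hq hl

lemma residueMoment_cast_zmod_two :
    (residueMoment l q : ZMod 2) = (q / 2 : ℕ) + gaussCount l q := by
  have : NeZero q := ⟨hq.pos.ne'⟩
  have hsum :
      ∑ k ∈ Icc 1 (q - 1), ((((l : ZMod q) * k).val : ℕ) : ZMod 2) = (q / 2 : ℕ) := by
    rw [sum_comp_val_mul_of_isUnit hl (fun n => (n : ZMod 2)), sum_Icc_natCast_zmod_two_of_odd hq]
  have heven : ∑ k ∈ Icc 1 (q - 1) with Even k, ((((l : ZMod q) * k).val : ℕ) : ZMod 2)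
      = gaussCount l q := by
    rw [← Nat.two_mul_odd_div_two (Nat.odd_iff.mp hq), sum_filter_even_Icc_two_mul, gaussCount,
      card_filter, Nat.cast_sum]
    refine sum_congr rfl fun j _ => ?_
    rw [Nat.cast_mul, Nat.cast_ofNat, mul_left_comm, val_two_mul_cast_zmod_two hq]
    push_cast
    rfl
  rw [residueMoment, Nat.cast_sum]
  push_cast
  rw [sum_natCast_mul_zmod_two, ← hsum, ← sum_filter_add_sum_filter_not (Icc 1 (q - 1)) Even,
    heven]
  ring_nf
  reduce_mod_char

lemma floorMoment_cast_zmod_two :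
    (floorMoment l q : ZMod 2) = (l + 1) * (q / 2 : ℕ) + gaussCount l q := by
  have : NeZero q := ⟨hq.pos.ne'⟩
  have h := congrArg (Int.cast : ℤ → ZMod 2) (residueMoment_eq (l := l) (q := q))
  push_cast at h
  simp only [ZMod.pow_card, sum_Icc_natCast_zmod_two_of_odd hq, hq.natCast_zmod_two,
    residueMoment_cast_zmod_two hq hl] at h
  linear_combination (norm := (ring_nf; reduce_mod_char)) h

end Parity

lemma modEq_eight_of_cast_zmod_two {q g : ℕ} (hq : Odd q) {l A : ℤ}
    (hA : (A : ZMod 2) = (l + 1) * (q / 2 : ℕ) + g) :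
    2 * l * (q - 1) * (2 * q - 1) - 12 * A - 3 * q * (q - 1) ≡ q + 1 - 2 * (-1) ^ g [ZMOD 8] := by
  obtain ⟨m, rfl⟩ := hq
  rw [show (2 * m + 1) / 2 = m by omega] at hA
  obtain ⟨w, hw⟩ : ((2 : ℕ) : ℤ) ∣ A - ((l + 1) * m + g) := by
    rw [← ZMod.intCast_zmod_eq_zero_iff_dvd]
    push_cast
    rw [hA, sub_self]
  obtain ⟨c, hc⟩ := Nat.even_mul_succ_self m
  have hc' : (m : ℤ) * (m + 1) = c + c := by exact_mod_cast hc
  rw [Int.modEq_iff_dvd]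
  rcases Nat.even_or_odd' g with ⟨t, rfl | rfl⟩
  · refine ⟨-(2 * l * m ^ 2 - l * m - 3 * c - m - 3 * w - 3 * t), ?_⟩
    rw [pow_mul, neg_one_sq, one_pow]
    push_cast at hw ⊢
    linear_combination 12 * hw + 12 * hc'
  · refine ⟨-(2 * l * m ^ 2 - l * m - 3 * c - m - 3 * w - 3 * t - 2), ?_⟩
    rw [pow_succ, pow_mul, neg_one_sq, one_pow]
    push_cast at hw ⊢
    linear_combination 12 * hw + 12 * hc'

theorem stmt9_general (q : ℕ) (l : ℤ) (hodd : Odd q) (hl : IsCoprime l (q : ℤ)) :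
    ∃ n : ℤ, (n : ℚ) = (q : ℚ) * S l q ∧ n ≡ (q : ℤ) + 1 - 2 * jacobiSym l q [ZMOD 8] := by
  have : NeZero q := ⟨hodd.pos.ne'⟩
  have hunit : IsUnit (l : ZMod q) := (ZMod.coe_int_isUnit_iff_isCoprime l q).mpr hl.symm
  refine ⟨_, (natCast_mul_S_natCast_eq_floorMoment hunit).symm, ?_⟩
  rw [jacobiSym_eq_neg_one_pow_gaussCount hodd hl]
  exact modEq_eight_of_cast_zmod_two hodd (floorMoment_cast_zmod_two hodd hunit)

theorem stmt9 (q : ℕ) (l : ℤ) (hq : 0 < q) (hodd : Odd q) (hl : IsCoprime l (q : ℤ)) :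
    ∃ n : ℤ, (n : ℚ) = (q : ℚ) * S l q ∧ n ≡ (q : ℤ) + 1 - 2 * jacobiSym l q [ZMOD 8] :=
  stmt9_general q l hodd hl
end
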